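/- For every self-adjoint operator D on a finite-dimensional complex inner product space W and every nonnegative real number d, there exists a unique real number t such that tE + D is positive semidefinite and det(tE + D) = d. -/

import Mathlib

open scoped InnerProductSpace

/-! In an orthonormal eigenbasis of `D` with eigenvalues `μ i`, the operator `t • 1 + D` acts
diagonally with real entries `t + μ i`. Hence it is positive semidefinite iff `t ≥ -min μ`, and its
determinant is `∏ i, (t + μ i)`, which on `[-min μ, ∞)` increases strictly and continuously from `0`
to `∞`; so it takes the value `d ≥ 0` exactly once there. -/

section ShiftedProduct

variable {ι : Type*} [Fintype ι] [Nonempty ι] (μ : ι → ℝ)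

theorem strictMonoOn_prod_add :
    StrictMonoOn (fun t => ∏ i, (t + μ i)) {t | ∀ i, 0 ≤ t + μ i} := by
  intro s hs u _ hsu
  have hu : ∀ i, 0 < u + μ i := fun i => by linarith [hs i]
  by_cases hpos : ∀ i, 0 < s + μ i
  · exact Finset.prod_lt_prod_of_nonempty (fun i _ => hpos i) (fun i _ => by linarith)
      Finset.univ_nonempty
  · obtain ⟨i, hi⟩ := not_forall.mp hpos
    have hzero : s + μ i = 0 := le_antisymm (not_lt.mp hi) (hs i)
    change ∏ i, (s + μ i) < ∏ i, (u + μ i)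
    rw [Finset.prod_eq_zero (Finset.mem_univ i) hzero]
    exact Finset.prod_pos fun i _ => hu i

theorem existsUnique_nonneg_prod_add_eq {d : ℝ} (hd : 0 ≤ d) :
    ∃! t : ℝ, (∀ i, 0 ≤ t + μ i) ∧ ∏ i, (t + μ i) = d := by
  obtain ⟨i₀, hi₀⟩ := Finite.exists_min μ
  set f := fun t : ℝ => ∏ i, (t + μ i)
  have hnonneg {t : ℝ} (ht : -μ i₀ ≤ t) (i : ι) : 0 ≤ t + μ i := by linarith [hi₀ i]
  have hf_start : f (-μ i₀) = 0 := Finset.prod_eq_zero (Finset.mem_univ i₀) (neg_add_cancel _)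
  have hf_end : d ≤ f (-μ i₀ + d + 1) := calc
    d ≤ (d + 1) ^ Fintype.card ι := by
      linarith [le_self_pow₀ (by linarith : 1 ≤ d + 1) (Fintype.card_ne_zero (α := ι))]
    _ = ∏ _i : ι, (d + 1) := by rw [Finset.prod_const, Finset.card_univ]
    _ ≤ f (-μ i₀ + d + 1) :=
      Finset.prod_le_prod (fun _ _ => by positivity) fun i _ => by linarith [hi₀ i]
  obtain ⟨t, ⟨ht, -⟩, hft⟩ := intermediate_value_Icc (by linarith : -μ i₀ ≤ -μ i₀ + d + 1)
    (by fun_prop : Continuous f).continuousOn ⟨hf_start ▸ hd, hf_end⟩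
  exact ⟨t, ⟨hnonneg ht, hft⟩, fun s hs =>
    (strictMonoOn_prod_add μ).injOn hs.1 (hnonneg ht) (hs.2.trans hft.symm)⟩

end ShiftedProduct

namespace OrthonormalBasis

variable {𝕜 E ι : Type*} [RCLike 𝕜] [NormedAddCommGroup E] [InnerProductSpace 𝕜 E]
  [Fintype ι] {b : OrthonormalBasis ι 𝕜 E} {T : E →ₗ[𝕜] E} {c : ι → ℝ}

theorem det_eq_prod_of_repr_apply_eq [DecidableEq ι]
    (hT : ∀ v i, b.repr (T v) i = c i * b.repr v i) :
    LinearMap.det T = ((∏ i, c i : ℝ) : 𝕜) := by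
  have hM : LinearMap.toMatrix b.toBasis b.toBasis T = Matrix.diagonal fun i => (c i : 𝕜) := by
    ext i j
    simp [LinearMap.toMatrix_apply, hT, Matrix.diagonal_apply]
  rw [← LinearMap.det_toMatrix b.toBasis, hM, Matrix.det_diagonal, RCLike.ofReal_prod]

theorem re_inner_map_self_eq_sum_of_repr_apply_eq (hT : ∀ v i, b.repr (T v) i = c i * b.repr v i)
    (v : E) : RCLike.re ⟪T v, v⟫_𝕜 = ∑ i, c i * ‖b.repr v i‖ ^ 2 := by
  rw [← b.repr.inner_map_map, PiLp.inner_apply, map_sum]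
  refine Finset.sum_congr rfl fun i _ => ?_
  rw [hT, ← smul_eq_mul, inner_smul_real_left, RCLike.smul_re, inner_self_eq_norm_sq]

theorem re_inner_map_self_nonneg_iff_of_repr_apply_eq
    (hT : ∀ v i, b.repr (T v) i = c i * b.repr v i) :
    (∀ v, 0 ≤ RCLike.re ⟪T v, v⟫_𝕜) ↔ ∀ i, 0 ≤ c i := by
  classical
  simp only [re_inner_map_self_eq_sum_of_repr_apply_eq hT]
  refine ⟨fun h i => by simpa [b.repr_self, PiLp.single_apply, apply_ite] using h (b i),
    fun h v => Finset.sum_nonneg fun i _ => mul_nonneg (h i) (sq_nonneg _)⟩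

end OrthonormalBasis

namespace LinearMap.IsSymmetric

variable {𝕜 E : Type*} [RCLike 𝕜] [NormedAddCommGroup E] [InnerProductSpace 𝕜 E]
  [FiniteDimensional 𝕜 E] {T : E →ₗ[𝕜] E} {n : ℕ}

theorem eigenvectorBasis_repr_smul_id_add_apply (hT : T.IsSymmetric)
    (hn : Module.finrank 𝕜 E = n) (t : ℝ) (v : E) (i : Fin n) :
    (hT.eigenvectorBasis hn).repr (((t : 𝕜) • (LinearMap.id : E →ₗ[𝕜] E) + T) v) i =
      ((t + hT.eigenvalues hn i : ℝ) : 𝕜) * (hT.eigenvectorBasis hn).repr v i := by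
  simp [hT.eigenvectorBasis_apply_self_apply hn, add_mul, RCLike.real_smul_eq_coe_mul]

end LinearMap.IsSymmetric

/-- For every self-adjoint (symmetric) operator `D` on a finite-dimensional complex
inner product space `W` (of dimension at least 1) and every nonnegative real `d`,
there is a unique real `t` such that `t • id + D` is positive semidefinite and
`det (t • id + D) = d`. -/
theorem unique_shift_selfAdjoint_posSemidef_det
    (W : Type*) [NormedAddCommGroup W] [InnerProductSpace ℂ W]
    [FiniteDimensional ℂ W] (hW : 1 ≤ Module.finrank ℂ W)
    (D : W →ₗ[ℂ] W) (hD : D.IsSymmetric) (d : ℝ) (hd : 0 ≤ d) :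
    ∃! t : ℝ,
      (∀ v : W, 0 ≤ (⟪((t : ℂ) • (LinearMap.id : W →ₗ[ℂ] W) + D) v, v⟫_ℂ).re) ∧
      LinearMap.det ((t : ℂ) • (LinearMap.id : W →ₗ[ℂ] W) + D) = (d : ℂ) := by
  obtain ⟨n, hn⟩ : ∃ n, Module.finrank ℂ W = n := ⟨_, rfl⟩
  have : Nonempty (Fin n) := ⟨⟨0, by omega⟩⟩
  set μ := hD.eigenvalues hn
  have hshift := hD.eigenvectorBasis_repr_smul_id_add_apply hn
  -- the statement casts `t` with `Complex.ofReal`, not with `RCLike.ofReal`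
  rw [RCLike.ofReal_eq_complex_ofReal] at hshift
  refine (existsUnique_congr fun t => and_congr ?_ ?_).mp
    (existsUnique_nonneg_prod_add_eq μ hd)
  · exact (OrthonormalBasis.re_inner_map_self_nonneg_iff_of_repr_apply_eq (hshift t)).symm
  · rw [OrthonormalBasis.det_eq_prod_of_repr_apply_eq (hshift t)]
    exact RCLike.ofReal_inj.symm
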